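/- Let α, ᾱ : [0,1] → [0,1] be two strictly decreasing continuous bijections with α(0) = ᾱ(0) = 1 and α(1) = ᾱ(1) = 0. For any function F : (0,1) → ℝ such that t ↦ (α'(t)/(1 - α(t))) · F(α(t)) is integrable on (0,1), we have ∫₀¹ (α'(t)/(1 - α(t))) · F(α(t)) dt = ∫₀¹ (ᾱ'(t)/(1 - ᾱ(t))) · F(ᾱ(t)) dt. -/
import Mathlib


open intervalIntegral Set

lemma deriv_nonpos_of_strictAntiOn {f f' : ℝ → ℝ} {t : ℝ}
    (hanti : StrictAntiOn f (Icc 0 1)) (ht : t ∈ Ioo (0:ℝ) 1)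
    (hd : HasDerivAt f (f' t) t) : f' t ≤ 0 := by
  have hslope := hasDerivAt_iff_tendsto_slope.mp hd
  have h1 : Filter.Tendsto (slope f t) (nhdsWithin t (Ioi t)) (nhds (f' t)) :=
    hslope.mono_left (nhdsWithin_mono t fun x hx => ne_of_gt hx)
  have : ∀ᶠ x in nhdsWithin t (Ioi t), slope f t x ≤ 0 := by
    have hev : ∀ᶠ x in nhdsWithin t (Ioi t), x < 1 :=
      eventually_nhdsWithin_of_eventually_nhds (eventually_lt_nhds ht.2)
    filter_upwards [hev, self_mem_nhdsWithin] with x hx1 hxt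
    have hxt : t < x := hxt
    have hfx : f x < f t := hanti ⟨ht.1.le, ht.2.le⟩ ⟨(ht.1.trans hxt).le, hx1.le⟩ hxt
    rw [slope_def_field]
    exact div_nonpos_of_nonpos_of_nonneg (by linarith) (by linarith)
  exact le_of_tendsto h1 this

lemma schedule_aux
    (α : ℝ → ℝ) (α' : ℝ → ℝ)
    (hα_anti : StrictAntiOn α (Icc 0 1))
    (hα_bij : BijOn α (Icc 0 1) (Icc 0 1))
    (hα0 : α 0 = 1) (hα1 : α 1 = 0)
    (hα_deriv : ∀ t ∈ Ioo (0:ℝ) 1, HasDerivAt α (α' t) t)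
    (F : ℝ → ℝ) :
    ∫ t in (0:ℝ)..1, α' t / (1 - α t) * F (α t)
      = - ∫ s in Ioo (0:ℝ) 1, F s / (1 - s) := by
  have himg : α '' Ioo 0 1 = Ioo (0:ℝ) 1 := by
    have hinj : InjOn α (Icc 0 1) := hα_anti.injOn
    have h1 : Ioo (0:ℝ) 1 = Icc 0 1 \ {0, 1} := by
      ext x
      constructor
      · intro hx
        refine ⟨⟨hx.1.le, hx.2.le⟩, ?_⟩
        simp only [mem_insert_iff, mem_singleton_iff, not_or]
        exact ⟨hx.1.ne', hx.2.ne⟩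
      · rintro ⟨h, hn⟩
        simp only [mem_insert_iff, mem_singleton_iff, not_or] at hn
        exact ⟨h.1.lt_of_ne (Ne.symm hn.1), h.2.lt_of_ne hn.2⟩
    have hsub : ({0, 1} : Set ℝ) ⊆ Icc 0 1 := by
      intro x hx
      rcases hx with rfl | hx
      · exact ⟨le_refl 0, zero_le_one⟩
      · rw [mem_singleton_iff] at hx; subst hx; exact ⟨zero_le_one, le_refl 1⟩
    rw [h1, hinj.image_diff_subset hsub, hα_bij.image_eq, image_pair, hα0, hα1,
      pair_comm, ← h1]
  have key := MeasureTheory.integral_image_eq_integral_abs_deriv_smul measurableSet_Ioo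
    (fun t ht => (hα_deriv t ht).hasDerivWithinAt)
    (hα_anti.injOn.mono Ioo_subset_Icc_self) (fun s => F s / (1 - s))
  rw [himg] at key
  rw [intervalIntegral.integral_of_le zero_le_one, MeasureTheory.integral_Ioc_eq_integral_Ioo,
    key, ← MeasureTheory.integral_neg]
  apply MeasureTheory.setIntegral_congr_fun measurableSet_Ioo
  intro t ht
  have hle : α' t ≤ 0 := deriv_nonpos_of_strictAntiOn hα_anti ht (hα_deriv t ht)
  simp only [smul_eq_mul, abs_of_nonpos hle]
  field_simp

/-- Invariance of the weighted loss integral of a masked diffusion model under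
reparametrization of the noise schedule, via the substitution `s = α t`. -/
theorem schedule_invariance
    (α αbar : ℝ → ℝ) (α' αbar' : ℝ → ℝ)
    (hα_anti : StrictAntiOn α (Icc 0 1)) (hαbar_anti : StrictAntiOn αbar (Icc 0 1))
    (hα_cont : ContinuousOn α (Icc 0 1)) (hαbar_cont : ContinuousOn αbar (Icc 0 1))
    (hα_bij : BijOn α (Icc 0 1) (Icc 0 1)) (hαbar_bij : BijOn αbar (Icc 0 1) (Icc 0 1))
    (hα0 : α 0 = 1) (hαbar0 : αbar 0 = 1) (hα1 : α 1 = 0) (hαbar1 : αbar 1 = 0)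
    (hα_deriv : ∀ t ∈ Ioo (0:ℝ) 1, HasDerivAt α (α' t) t)
    (hαbar_deriv : ∀ t ∈ Ioo (0:ℝ) 1, HasDerivAt αbar (αbar' t) t)
    (F : ℝ → ℝ)
    (hint : IntervalIntegrable (fun t => α' t / (1 - α t) * F (α t)) MeasureTheory.volume 0 1) :
    ∫ t in (0:ℝ)..1, α' t / (1 - α t) * F (α t)
      = ∫ t in (0:ℝ)..1, αbar' t / (1 - αbar t) * F (αbar t) := by
  rw [schedule_aux α α' hα_anti hα_bij hα0 hα1 hα_deriv F,
    schedule_aux αbar αbar' hαbar_anti hαbar_bij hαbar0 hαbar1 hαbar_deriv F]
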